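/- Let k ≥ 1, m ≥ 1, n = k + m, and let S be a skew-symmetric n×n real matrix. Consider smooth functions of variables y_{ij} (1 ≤ i ≤ k, 1 ≤ j ≤ m) and nonzero variables d_1, …, d_n, with the bracket defined as the biderivation determined on coordinates by: {y_{ij}, y_{αβ}} = ½·(sign(α−i) − sign(β−j))·y_{iβ}·y_{αj}, {d_a, d_b} = −½·S_{ab}·d_a·d_b, and {y_{ij}, d_a} = 0. Define ỹ_{ij} = y_{ij}·d_{j+k}/d_i. Then for all i, α ∈ {1,…,k} and j, β ∈ {1,…,m}: {ỹ_{ij}, ỹ_{αβ}} = ½·(sign(α−i) − sign(β−j))·ỹ_{iβ}·ỹ_{αj} + ½·(S_{i,β+k} + S_{j+k,α} − S_{i,α} − S_{j+k,β+k})·ỹ_{ij}·ỹ_{αβ}. (This is the computation showing that the right action of the diagonal torus H^{−½S} on the open Schubert cell of G_k(n) with the standard Poisson homogeneous bracket produces the bracket {·,·}_S^{Gr}.) -/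

import Mathlib

/-- The domain with coordinates `y_{ij}` (`i ∈ [k]`, `j ∈ [m]`) and `d_a` (`a ∈ [n]`,
`n = k + m`). -/
abbrev Dom (k m : ℕ) := ((Fin k × Fin m) → ℝ) × (Fin (k + m) → ℝ)

/-- Partial derivative of `f` with respect to the coordinate `y_v` at `p`. -/
noncomputable def pdY {k m : ℕ} (f : Dom k m → ℝ) (v : Fin k × Fin m) (p : Dom k m) : ℝ :=
  fderiv ℝ f p (Pi.single v 1, 0)

/-- Partial derivative of `f` with respect to the coordinate `d_a` at `p`. -/
noncomputable def pdD {k m : ℕ} (f : Dom k m → ℝ) (a : Fin (k + m)) (p : Dom k m) : ℝ :=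
  fderiv ℝ f p (0, Pi.single a 1)

/-- The product bracket of the standard Poisson homogeneous bracket
`{y_{ij}, y_{αβ}} = ½(sign(α−i) − sign(β−j)) y_{iβ} y_{αj}` on the open Schubert cell and
the torus bracket `{d_a, d_b} = −½ S_{ab} d_a d_b` on `H^{−½S}`, with cross brackets zero,
extended to smooth functions as a biderivation. -/
noncomputable def cellTorusBracket {k m : ℕ} (S : Matrix (Fin (k + m)) (Fin (k + m)) ℝ)
    (f g : Dom k m → ℝ) (p : Dom k m) : ℝ :=
  (∑ v : Fin k × Fin m, ∑ w : Fin k × Fin m,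
      ((1 / 2 : ℝ) *
          ((Int.sign ((w.1 : ℤ) - (v.1 : ℤ)) - Int.sign ((w.2 : ℤ) - (v.2 : ℤ)) : ℤ) : ℝ)
        * p.1 (v.1, w.2) * p.1 (w.1, v.2)) * pdY f v p * pdY g w p)
  + ∑ a : Fin (k + m), ∑ b : Fin (k + m),
      (-(1 / 2 : ℝ) * S a b * p.2 a * p.2 b) * pdD f a p * pdD g b p

/-- `ỹ_{ij} = y_{ij} · d_{j+k} / d_i`, the coordinates of the point `X·D` for
`X = [1_k Y]` and `D = diag(d_1,…,d_n)`. -/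
noncomputable def ytil {k m : ℕ} (i : Fin k) (j : Fin m) (p : Dom k m) : ℝ :=
  p.1 (i, j) * p.2 (Fin.natAdd k j) / p.2 (Fin.castAdd m i)

/-
`ỹ_{ij}` involves `y` only through `y_{ij}`, so the cell part of the bracket of `ỹ_{ij}` and
`ỹ_{αβ}` is the single term `{y_{ij}, y_{αβ}} (d_{j+k}/d_i)(d_{β+k}/d_α)`, and the same rescalings
turn `y_{iβ} y_{αj}` into `ỹ_{iβ} ỹ_{αj}`. In the torus variables `ỹ_{ij}` is a monomial of
multidegree `w_{ij} = e_{j+k} − e_i`, so `d_a ∂_a ỹ_{ij} = (w_{ij})_a ỹ_{ij}` and the torus part is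
`−½ ⟨w_{ij}, S w_{αβ}⟩ ỹ_{ij} ỹ_{αβ}`; expanding the pairing gives the four entries of `S`.
-/

open Matrix

section
variable {k m : ℕ}

theorem castAdd_ne_natAdd (i : Fin k) (j : Fin m) : Fin.castAdd m i ≠ Fin.natAdd k j :=
  Fin.ne_of_val_ne (by rw [Fin.val_castAdd, Fin.val_natAdd]; omega)

theorem fderiv_ytil_apply {i : Fin k} {j : Fin m} {p : Dom k m}
    (hI : p.2 (Fin.castAdd m i) ≠ 0) (u : Dom k m) :
    fderiv ℝ (ytil i j) p u =
      (u.1 (i, j) * p.2 (Fin.natAdd k j) + p.1 (i, j) * u.2 (Fin.natAdd k j))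
          / p.2 (Fin.castAdd m i)
        - p.1 (i, j) * p.2 (Fin.natAdd k j) * u.2 (Fin.castAdd m i)
          / p.2 (Fin.castAdd m i) ^ 2 := by
  have hy (v) : HasFDerivAt (fun q : Dom k m => q.1 v)
      ((ContinuousLinearMap.proj v).comp (ContinuousLinearMap.fst ℝ _ _)) p := by
    exact (hasFDerivAt_apply v p.1).comp p (hasFDerivAt_fst (𝕜 := ℝ) (p := p))
  have hd (a) : HasFDerivAt (fun q : Dom k m => q.2 a)
      ((ContinuousLinearMap.proj a).comp (ContinuousLinearMap.snd ℝ _ _)) p := by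
    exact (hasFDerivAt_apply a p.2).comp p (hasFDerivAt_snd (𝕜 := ℝ) (p := p))
  have h : HasFDerivAt
      (fun q : Dom k m => q.1 (i, j) * q.2 (Fin.natAdd k j) * (q.2 (Fin.castAdd m i))⁻¹) _ p :=
    ((hy (i, j)).fun_mul (hd (Fin.natAdd k j))).fun_mul
      ((hasFDerivAt_inv hI).comp p (hd (Fin.castAdd m i)))
  rw [show ytil i j = fun q => q.1 (i, j) * q.2 (Fin.natAdd k j) * (q.2 (Fin.castAdd m i))⁻¹
    from funext fun q => div_eq_mul_inv _ _, h.fderiv]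
  simp only [_root_.add_apply, _root_.smul_apply, ContinuousLinearMap.comp_apply,
    ContinuousLinearMap.coe_fst', ContinuousLinearMap.coe_snd',
    ContinuousLinearMap.proj_apply, ContinuousLinearMap.toSpanSingleton_apply, smul_eq_mul]
  field_simp
  ring

theorem pdY_ytil {i : Fin k} {j : Fin m} {p : Dom k m} (hI : p.2 (Fin.castAdd m i) ≠ 0)
    (v : Fin k × Fin m) :
    pdY (ytil i j) v p =
      (Pi.single (i, j) (p.2 (Fin.natAdd k j) / p.2 (Fin.castAdd m i)) : Fin k × Fin m → ℝ) v := by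
  rw [pdY, fderiv_ytil_apply hI]
  rcases eq_or_ne v (i, j) with rfl | hv
  · simp
  · simp [hv, Ne.symm hv]

def torusWeight (i : Fin k) (j : Fin m) : Fin (k + m) → ℝ :=
  Pi.single (Fin.natAdd k j) 1 - Pi.single (Fin.castAdd m i) 1

theorem mul_pdD_ytil {i : Fin k} {j : Fin m} {p : Dom k m} (hI : p.2 (Fin.castAdd m i) ≠ 0)
    (a : Fin (k + m)) :
    p.2 a * pdD (ytil i j) a p = torusWeight i j a * ytil i j p := by
  rw [pdD, fderiv_ytil_apply hI, torusWeight, ytil]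
  have hIJ := castAdd_ne_natAdd i j
  by_cases ha : a = Fin.natAdd k j ∨ a = Fin.castAdd m i
  · rcases ha with rfl | rfl <;>
    · simp only [Pi.zero_apply, Pi.sub_apply, Pi.single_eq_same, Pi.single_eq_of_ne hIJ,
        Pi.single_eq_of_ne hIJ.symm]
      field_simp
      ring
  · obtain ⟨hJ, hI'⟩ := not_or.mp ha
    simp [hJ, hI']

theorem sum_sum_mul_pdY_ytil (c : Fin k × Fin m → Fin k × Fin m → ℝ) {i α : Fin k} {j β : Fin m}
    {p : Dom k m} (hI : p.2 (Fin.castAdd m i) ≠ 0) (hA : p.2 (Fin.castAdd m α) ≠ 0) :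
    ∑ v, ∑ w, c v w * pdY (ytil i j) v p * pdY (ytil α β) w p
      = c (i, j) (α, β) * (p.2 (Fin.natAdd k j) / p.2 (Fin.castAdd m i))
          * (p.2 (Fin.natAdd k β) / p.2 (Fin.castAdd m α)) := by
  simp [pdY_ytil hI, pdY_ytil hA, Pi.single_apply]

theorem sum_sum_mul_pdD_of_homogeneous (S : Matrix (Fin (k + m)) (Fin (k + m)) ℝ)
    {f g : Dom k m → ℝ} {e e' : Fin (k + m) → ℝ} {p : Dom k m}
    (hf : ∀ a, p.2 a * pdD f a p = e a * f p) (hg : ∀ b, p.2 b * pdD g b p = e' b * g p) :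
    ∑ a, ∑ b, (-(1 / 2 : ℝ) * S a b * p.2 a * p.2 b) * pdD f a p * pdD g b p
      = -(1 / 2 : ℝ) * (e ⬝ᵥ S *ᵥ e') * f p * g p := by
  simp only [dotProduct, mulVec, Finset.sum_mul, Finset.mul_sum]
  refine Finset.sum_congr rfl fun a _ => Finset.sum_congr rfl fun b _ => ?_
  calc _ = -(1 / 2 : ℝ) * S a b * (p.2 a * pdD f a p) * (p.2 b * pdD g b p) := by ring
    _ = _ := by rw [hf, hg]; ring

theorem torusWeight_dotProduct_mulVec_torusWeight (S : Matrix (Fin (k + m)) (Fin (k + m)) ℝ)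
    (i α : Fin k) (j β : Fin m) :
    torusWeight i j ⬝ᵥ S *ᵥ torusWeight α β
      = S (Fin.natAdd k j) (Fin.natAdd k β) - S (Fin.natAdd k j) (Fin.castAdd m α)
        - S (Fin.castAdd m i) (Fin.natAdd k β) + S (Fin.castAdd m i) (Fin.castAdd m α) := by
  simp only [torusWeight, mulVec_sub, mulVec_single, MulOpposite.op_one, one_smul,
    dotProduct_sub, sub_dotProduct, single_dotProduct, col_apply, one_mul]
  ring

end

theorem torus_action_gives_grassmannian_bracket_general (k m : ℕ)
    (S : Matrix (Fin (k + m)) (Fin (k + m)) ℝ)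
    (p : Dom k m) (hp : ∀ a, p.2 a ≠ 0)
    (i α : Fin k) (j β : Fin m) :
    cellTorusBracket S (ytil i j) (ytil α β) p
      = (1 / 2 : ℝ) *
          ((Int.sign ((α : ℤ) - (i : ℤ)) - Int.sign ((β : ℤ) - (j : ℤ)) : ℤ) : ℝ)
          * ytil i β p * ytil α j p
        + (1 / 2 : ℝ) *
            (S (Fin.castAdd m i) (Fin.natAdd k β) + S (Fin.natAdd k j) (Fin.castAdd m α)
              - S (Fin.castAdd m i) (Fin.castAdd m α)
              - S (Fin.natAdd k j) (Fin.natAdd k β))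
          * ytil i j p * ytil α β p := by
  have hI := hp (Fin.castAdd m i)
  have hA := hp (Fin.castAdd m α)
  rw [cellTorusBracket, sum_sum_mul_pdY_ytil _ hI hA,
    sum_sum_mul_pdD_of_homogeneous S (mul_pdD_ytil hI) (mul_pdD_ytil hA),
    torusWeight_dotProduct_mulVec_torusWeight]
  simp only [ytil]
  field_simp
  ring

/-- The right torus action on the open Schubert cell of `G_k(n)` produces the bracket
`{·,·}_S^{Gr}`: in the product structure on `G_k(n)^{0} × H^{−½S}`, the functions
`ỹ_{ij} = y_{ij} d_{j+k}/d_i` satisfy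
`{ỹ_{ij}, ỹ_{αβ}} = ½(sign(α−i) − sign(β−j)) ỹ_{iβ} ỹ_{αj}
  + ½(S_{i,β+k} + S_{j+k,α} − S_{i,α} − S_{j+k,β+k}) ỹ_{ij} ỹ_{αβ}`. -/
theorem torus_action_gives_grassmannian_bracket (k m : ℕ) (hk : 1 ≤ k) (hm : 1 ≤ m)
    (S : Matrix (Fin (k + m)) (Fin (k + m)) ℝ) (hS : Matrix.transpose S = -S)
    (p : Dom k m) (hp : ∀ a, p.2 a ≠ 0)
    (i α : Fin k) (j β : Fin m) :
    cellTorusBracket S (ytil i j) (ytil α β) p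
      = (1 / 2 : ℝ) *
          ((Int.sign ((α : ℤ) - (i : ℤ)) - Int.sign ((β : ℤ) - (j : ℤ)) : ℤ) : ℝ)
          * ytil i β p * ytil α j p
        + (1 / 2 : ℝ) *
            (S (Fin.castAdd m i) (Fin.natAdd k β) + S (Fin.natAdd k j) (Fin.castAdd m α)
              - S (Fin.castAdd m i) (Fin.castAdd m α)
              - S (Fin.natAdd k j) (Fin.natAdd k β))
          * ytil i j p * ytil α β p :=
  torus_action_gives_grassmannian_bracket_general k m S p hp i α j β
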